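/- arXiv:1407.4420 — 3 statements merged into one kernel-verified Lean document; each statement's English description precedes it below -/
import Mathlib

section
/- Suppose Φ : ℝ^L → H is differentiable, and for fixed v ∈ ℝ^L let ∇₁κ(u,v) denote the gradient at u of the map w ↦ ⟨Φ(w), Φ(v)⟩_H. Then, with x_1,…,x_T and all e_m for m ≠ n held fixed, the function e_n ↦ J (the kernel-NMF cost) is differentiable and its gradient equals ∑_{t=1}^T a_{nt} ( −∇₁κ(e_n, x_t) + ∑_{m=1}^N a_{mt} ∇₁κ(e_n, e_m) ). -/
/-!
Only the residual `Φ(x_t) - ∑_m a_{mt} Φ(e_m)` depends on `e_n`, through the single term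
`a_{nt} Φ(e_n)`, so the derivative of `J` at `e_n` in direction `h` is
`-∑_t a_{nt} ⟪Φ(x_t) - ∑_m a_{mt} Φ(e_m), DΦ(e_n) h⟫`. Each pairing `⟪DΦ(e_n) h, Φ(v)⟫` is the
derivative of `w ↦ κ(w, v)`, i.e. `⟪∇₁κ(e_n, v), h⟫`, by uniqueness of the Fréchet derivative.
-/

open RealInnerProductSpace Finset

theorem HasGradientAt.inner_eq_of_hasFDerivAt_inner_const {E F : Type*} [NormedAddCommGroup E]
    [InnerProductSpace ℝ E] [CompleteSpace E] [NormedAddCommGroup F] [InnerProductSpace ℝ F]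
    {Φ : E → F} {D : E →L[ℝ] F} {u g : E} {c : F} (hΦ : HasFDerivAt Φ D u) (hg : HasGradientAt (fun w => ⟪Φ w, c⟫) g u)
    (h : E) : ⟪g, h⟫ = ⟪D h, c⟫ := by
  have hκ : HasFDerivAt (fun w => ⟪Φ w, c⟫) ((innerSL ℝ c).comp D) u := by
    rw [show (fun w => ⟪Φ w, c⟫) = fun w => ⟪c, Φ w⟫ from funext fun w => real_inner_comm c (Φ w)]
    exact (innerSL ℝ c).hasFDerivAt.comp u hΦ
  have hg_apply := congrArg (fun f : E →L[ℝ] ℝ => f h) (hg.hasFDerivAt.unique hκ)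
  simpa only [InnerProductSpace.toDual_apply_apply, ContinuousLinearMap.comp_apply,
    coe_innerSL_apply, real_inner_comm c] using hg_apply

theorem HasFDerivAt.sum_smul_update {ι E F : Type*} [Fintype ι] [DecidableEq ι]
    [NormedAddCommGroup E] [NormedSpace ℝ E] [NormedAddCommGroup F] [NormedSpace ℝ F]
    {Φ : E → F} {D : E →L[ℝ] F} (a : ι → ℝ) (e : ι → E) (n : ι) (hΦ : HasFDerivAt Φ D (e n)) :
    HasFDerivAt (fun y => ∑ m, a m • Φ (Function.update e n y m)) (a n • D) (e n) := by
  have hsplit : (fun y => ∑ m, a m • Φ (Function.update e n y m))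
      = fun y => a n • Φ y + ∑ m ∈ univ.erase n, a m • Φ (e m) := by
    funext y
    rw [← add_sum_erase _ _ (mem_univ n), Function.update_self]
    congr 1
    exact sum_congr rfl fun m hm => by rw [Function.update_of_ne (ne_of_mem_erase hm)]
  rw [hsplit]
  exact (hΦ.const_smul (a n)).add_const _

/-- Gradient of the kernel-NMF cost with respect to the endmember `e_n`:
`∇_{e_n} J = ∑_t a_{nt} ( −∇₁κ(e_n,x_t) + ∑_m a_{mt} ∇₁κ(e_n,e_m) )`,
where `∇₁κ(u,v)` is the gradient at `u` of `w ↦ ⟪Φ(w),Φ(v)⟫`. -/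
theorem kernelNMF_cost_gradient_endmember
    {L N T : ℕ} {H : Type*} [NormedAddCommGroup H] [InnerProductSpace ℝ H]
    (Φ : EuclideanSpace ℝ (Fin L) → H) (hΦ : Differentiable ℝ Φ)
    (x : Fin T → EuclideanSpace ℝ (Fin L))
    (e : Fin N → EuclideanSpace ℝ (Fin L))
    (a : Fin N → Fin T → ℝ) (n : Fin N)
    (gradκ : EuclideanSpace ℝ (Fin L) → EuclideanSpace ℝ (Fin L) →
      EuclideanSpace ℝ (Fin L))
    (hgradκ : ∀ u v, HasGradientAt (fun w => ⟪Φ w, Φ v⟫) (gradκ u v) u) :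
    HasGradientAt
      (fun en : EuclideanSpace ℝ (Fin L) =>
        (1/2 : ℝ) * ∑ t, ‖Φ (x t) - ∑ m, a m t • Φ (Function.update e n en m)‖^2)
      (∑ t, a n t • (-gradκ (e n) (x t) + ∑ m, a m t • gradκ (e n) (e m)))
      (e n) := by
  have hD := (hΦ (e n)).hasFDerivAt
  set D := fderiv ℝ Φ (e n)
  have hresidual_sq t := ((hD.sum_smul_update (a · t) e n).const_sub (Φ (x t))).norm_sq
  refine ((HasFDerivAt.fun_sum fun t _ => hresidual_sq t).const_mul (1/2 : ℝ)).congr_fderiv ?_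
  ext h
  have hκ v : ⟪gradκ (e n) v, h⟫ = ⟪D h, Φ v⟫ :=
    (hgradκ (e n) v).inner_eq_of_hasFDerivAt_inner_const hD h
  simp only [Function.update_eq_self, _root_.smul_apply, _root_.sum_apply,
    ContinuousLinearMap.comp_apply, _root_.neg_apply, innerSL_apply_apply,
    InnerProductSpace.toDual_apply_apply, sum_inner, inner_add_left, inner_neg_left,
    real_inner_smul_left, hκ, inner_sub_left, inner_neg_right, real_inner_smul_right,
    real_inner_comm (D h), smul_eq_mul]
  rw [mul_sum]
  refine sum_congr rfl fun t _ => ?_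
  rw [mul_add, mul_sum, nsmul_eq_mul]
  ring
end

section
/- The inequality (xᵀe)^{d−2} ≥ (eᵀe)^{d−2}, claimed in earlier work for all x ∈ [0,255]^L and e ∈ [0,1]^L, fails in general: for every integer d ≥ 3, every nonzero e ∈ ℝ^L with entries in [0,1], and every x ∈ ℝ^L with entries in [0,255] such that xᵀe = 0, one has (xᵀe)^{d−2} < (eᵀe)^{d−2}. In particular, orthogonal x and e provide counterexamples. -/
open Finset

/-- The inequality `(xᵀe)^{d−2} ≥ (eᵀe)^{d−2}` claimed in earlier work fails in
general: for `d ≥ 3`, any nonzero `e ∈ [0,1]^L` and any `x ∈ [0,255]^L`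
orthogonal to `e`, one has `(xᵀe)^{d−2} < (eᵀe)^{d−2}`. -/
theorem polyNMF_inequality_fails
    {L : ℕ} (d : ℕ) (hd : 3 ≤ d) (x e : Fin L → ℝ) (he : e ≠ 0)
    (he01 : ∀ i, e i ∈ Set.Icc (0 : ℝ) 1)
    (hx : ∀ i, x i ∈ Set.Icc (0 : ℝ) 255)
    (horth : ∑ i, x i * e i = 0) :
    (∑ i, x i * e i) ^ (d - 2) < (∑ i, e i * e i) ^ (d - 2) := by
  rw [horth, zero_pow (by omega)]
  apply pow_pos
  obtain ⟨j, hj⟩ : ∃ j, e j ≠ 0 := Function.ne_iff.mp he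
  exact Finset.sum_pos' (fun i _ => mul_self_nonneg _) ⟨j, Finset.mem_univ j, mul_pos (lt_of_le_of_ne (he01 j).1 (Ne.symm hj)) (lt_of_le_of_ne (he01 j).1 (Ne.symm hj))⟩
end

section
/- Fix n ∈ {1,…,N}, nonnegative data x_1,…,x_T ∈ ℝ^L, coefficients a_{jt} ∈ ℝ, and vectors e_j ∈ ℝ^L for j ≠ n. Define J(e) = (1/2)∑_{t=1}^T ‖x_t x_tᵀ − a_{nt}·e eᵀ − ∑_{j≠n} a_{jt}·e_j e_jᵀ‖²_F for e ∈ ℝ^L. Then for each coordinate k ∈ {1,…,L}, the second partial derivative ∂²J/∂e_k² evaluated at e = 0 equals 2·∑_{t=1}^T a_{nt}( ∑_{j≠n} a_{jt} e_{jk}² − x_{kt}² ), where x_{kt} and e_{jk} denote the k-th entries of x_t and e_j. -/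
/-!
On the `k`-th coordinate axis `e = s • eₖ` we have `e eᵀ = s² Eₖₖ`, so only the `(k, k)` entry of
each residual `Cₜ - aₙₜ s² Eₖₖ` moves and `J(s) = K + B s² + D s⁴` is an even quartic in `s`. Its
second derivative at `0` is `2B`, where `B = -∑ₜ aₙₜ (Cₜ)ₖₖ` and `Cₜ = xₜxₜᵀ - ∑_{j≠n} aⱼₜ eⱼeⱼᵀ`.
-/

open Finset

attribute [local instance] Matrix.frobeniusNormedAddCommGroup

namespace Matrix

variable {m n : Type*}

theorem vecMulVec_single_single [DecidableEq m] [DecidableEq n] {α : Type*} [MulZeroClass α]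
    (i : m) (j : n) (r s : α) :
    vecMulVec (Pi.single i r) (Pi.single j s) = single i j (r * s) := by
  ext i' j'
  rcases eq_or_ne i' i with rfl | hi <;> rcases eq_or_ne j' j with rfl | hj <;>
    simp [vecMulVec_apply, *, Ne.symm]

variable [Fintype m] [Fintype n]

theorem frobenius_norm_sq_eq_sum (A : Matrix m n ℝ) : ‖A‖ ^ 2 = ∑ i, ∑ j, A i j ^ 2 := by
  rw [frobenius_norm_def, ← Real.rpow_natCast, ← Real.rpow_mul (by positivity)]
  norm_num

theorem frobenius_norm_sub_single_sq [DecidableEq m] [DecidableEq n] (A : Matrix m n ℝ)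
    (i : m) (j : n) (r : ℝ) :
    ‖A - single i j r‖ ^ 2 = ‖A‖ ^ 2 - 2 * r * A i j + r ^ 2 := by
  have hentry : ∀ i' j', (A - single i j r) i' j' ^ 2
      = A i' j' ^ 2 + single i j (r ^ 2 - 2 * r * A i j) i' j' := by
    intro i' j'
    rw [sub_apply, single_apply, single_apply]
    split_ifs with h
    · obtain ⟨rfl, rfl⟩ := h
      ring
    · simp
  rw [frobenius_norm_sq_eq_sum, frobenius_norm_sq_eq_sum]
  simp_rw [hentry, sum_add_distrib]
  simp only [single_apply, ite_and, sum_ite_irrel, sum_ite_eq, mem_univ, ↓reduceIte,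
    sum_const_zero]
  ring

end Matrix

theorem iteratedDeriv_two_even_quartic_at_zero (K B D : ℝ) :
    iteratedDeriv 2 (fun s : ℝ => K + B * s ^ 2 + D * s ^ 4) 0 = 2 * B := by
  have hderiv : deriv (fun s : ℝ => K + B * s ^ 2 + D * s ^ 4)
      = fun s => B * (2 * s) + D * (4 * s ^ 3) := by
    ext s
    exact ((((hasDerivAt_pow 2 s).const_mul B).const_add K).add
      ((hasDerivAt_pow 4 s).const_mul D)).deriv.trans (by norm_num)
  rw [iteratedDeriv_succ, iteratedDeriv_one, hderiv]
  exact ((((hasDerivAt_id (0 : ℝ)).const_mul 2).const_mul B).add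
    (((hasDerivAt_pow 3 (0 : ℝ)).const_mul 4).const_mul D)).deriv.trans (by ring)

theorem iteratedDeriv_two_half_sum_norm_sq_sub_smul_vecMulVec_single {ι n : Type*} [Fintype ι]
    [Fintype n] [DecidableEq n] (C : ι → Matrix n n ℝ) (c : ι → ℝ) (k : n) :
    iteratedDeriv 2 (fun s : ℝ => (1 / 2 : ℝ) *
        ∑ t, ‖C t - c t • Matrix.vecMulVec (Pi.single k s) (Pi.single k s)‖ ^ 2) 0
      = -2 * ∑ t, c t * C t k k := by
  have hquartic : (fun s : ℝ => (1 / 2 : ℝ) *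
        ∑ t, ‖C t - c t • Matrix.vecMulVec (Pi.single k s) (Pi.single k s)‖ ^ 2)
      = fun s => (1 / 2) * ∑ t, ‖C t‖ ^ 2 + (-∑ t, c t * C t k k) * s ^ 2
          + ((1 / 2) * ∑ t, c t ^ 2) * s ^ 4 := by
    ext s
    simp_rw [Matrix.vecMulVec_single_single, Matrix.smul_single, smul_eq_mul,
      Matrix.frobenius_norm_sub_single_sq, mul_sum, neg_mul, sum_mul, ← sum_neg_distrib,
      ← sum_add_distrib]
    exact sum_congr rfl fun t _ => by ring
  rw [hquartic, iteratedDeriv_two_even_quartic_at_zero]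
  ring

theorem kernelNMF_quadratic_second_partial_at_zero_general
    {L N T : ℕ} (n : Fin N)
    (x : Fin T → Fin L → ℝ)
    (a : Fin N → Fin T → ℝ)
    (e : Fin N → Fin L → ℝ)
    (k : Fin L) :
    iteratedDeriv 2
      (fun s : ℝ =>
        (1/2 : ℝ) * ∑ t, ‖Matrix.vecMulVec (x t) (x t)
            - a n t • Matrix.vecMulVec (Pi.single k s) (Pi.single k s)
            - ∑ j ∈ univ.erase n, a j t • Matrix.vecMulVec (e j) (e j)‖^2) 0
      = 2 * ∑ t, a n t * (∑ j ∈ univ.erase n, a j t * (e j k)^2 - (x t k)^2) := by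
  simp_rw [sub_right_comm _ (a _ _ • _)]
  rw [iteratedDeriv_two_half_sum_norm_sq_sub_smul_vecMulVec_single, mul_sum, mul_sum]
  refine sum_congr rfl fun t _ => ?_
  simp only [Matrix.sub_apply, Matrix.sum_apply, Matrix.smul_apply, Matrix.vecMulVec_apply,
    smul_eq_mul, ← sq]
  ring

/-- For the quadratic polynomial kernel (feature map `Φ(u) = u uᵀ`), the second
partial derivative `∂²J/∂e_k²` of the kernel-NMF cost in the endmember `e = e_n`,
evaluated at `e = 0`, equals `2 ∑_t a_{nt}(∑_{j≠n} a_{jt} e_{jk}² − x_{kt}²)`. -/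
theorem kernelNMF_quadratic_second_partial_at_zero
    {L N T : ℕ} (n : Fin N)
    (x : Fin T → Fin L → ℝ) (hx : ∀ t i, 0 ≤ x t i)
    (a : Fin N → Fin T → ℝ)
    (e : Fin N → Fin L → ℝ)
    (k : Fin L) :
    iteratedDeriv 2
      (fun s : ℝ =>
        (1/2 : ℝ) * ∑ t, ‖Matrix.vecMulVec (x t) (x t)
            - a n t • Matrix.vecMulVec (Pi.single k s) (Pi.single k s)
            - ∑ j ∈ univ.erase n, a j t • Matrix.vecMulVec (e j) (e j)‖^2) 0
      = 2 * ∑ t, a n t * (∑ j ∈ univ.erase n, a j t * (e j k)^2 - (x t k)^2) :=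
  kernelNMF_quadratic_second_partial_at_zero_general n x a e k
end
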